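/- Let 0 < ν < √2 and let A be the soliton on finite background. Then for every ξ ≠ 0 and every τ ∈ ℝ one has A(ξ,τ) ≠ 0: singular points of the SFB can only occur at ξ = 0. (Indeed for ξ ≠ 0 one has sin φ(ξ) ≠ 0 and G(ξ,τ) > 0, so the imaginary part of G(ξ,τ)e^{iφ(ξ)} − 1 is nonzero.) -/
import Mathlib


open Real Filter Topology

/-- Benjamin–Feir growth rate `σ = ν√(2−ν²)`. -/
noncomputable def sfbSigma (ν : ℝ) : ℝ := ν * Real.sqrt (2 - ν ^ 2)

/-- Displaced amplitude `G(ξ,τ) = P(ξ)/(Q(ξ) − σ cos(ντ))` of the SFB, with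
`P(ξ) = ν√2·√(2ν²cosh²(σξ) − σ²)` and `Q(ξ) = ν√2·cosh(σξ)`. -/
noncomputable def sfbG (ν ξ τ : ℝ) : ℝ :=
  (ν * Real.sqrt 2 * Real.sqrt (2 * ν ^ 2 * Real.cosh (sfbSigma ν * ξ) ^ 2 - sfbSigma ν ^ 2)) /
  (ν * Real.sqrt 2 * Real.cosh (sfbSigma ν * ξ) - sfbSigma ν * Real.cos (ν * τ))

/-- SFB phase `φ(ξ) = arctan(−(σ/ν²) tanh(σξ))`. -/
noncomputable def sfbPhi (ν ξ : ℝ) : ℝ :=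
  Real.arctan (-(sfbSigma ν / ν ^ 2) * Real.tanh (sfbSigma ν * ξ))

/-- The soliton on finite background: `A(ξ,τ) = e^{−iξ}(G(ξ,τ)e^{iφ(ξ)} − 1)`. -/
noncomputable def sfbA (ν ξ τ : ℝ) : ℂ :=
  Complex.exp (-Complex.I * (ξ : ℂ)) *
    ((sfbG ν ξ τ : ℂ) * Complex.exp (Complex.I * (sfbPhi ν ξ : ℂ)) - 1)

/-- For `0 < ν < √2`, the SFB does not vanish away from `ξ = 0`:
singular points of the SFB can only occur at `ξ = 0`. -/
theorem sfb_nonvanishing_off_zero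
    (ν : ℝ) (hν0 : 0 < ν) (hν2 : ν < Real.sqrt 2) :
    ∀ ξ τ : ℝ, ξ ≠ 0 → sfbA ν ξ τ ≠ 0 := by
  intro ξ τ hξ h
  have hν2sq : ν ^ 2 < 2 := (Real.lt_sqrt hν0.le).mp hν2
  have hσ : 0 < sfbSigma ν :=
    mul_pos hν0 (Real.sqrt_pos.mpr (by linarith))
  have hσsq : sfbSigma ν ^ 2 = ν ^ 2 * (2 - ν ^ 2) := by
    rw [sfbSigma, mul_pow, Real.sq_sqrt (by linarith)]
  have hcosh : 1 ≤ Real.cosh (sfbSigma ν * ξ) := Real.one_le_cosh _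
  have hs2 : Real.sqrt (2 - ν ^ 2) < Real.sqrt 2 :=
    Real.sqrt_lt_sqrt (by nlinarith) (by nlinarith)
  have hs2pos : 0 < Real.sqrt 2 := Real.sqrt_pos.mpr (by norm_num)
  -- G > 0
  have hden : 0 < ν * Real.sqrt 2 * Real.cosh (sfbSigma ν * ξ) - sfbSigma ν * Real.cos (ν * τ) := by
    have h1 : ν * Real.sqrt 2 ≤ ν * Real.sqrt 2 * Real.cosh (sfbSigma ν * ξ) := by
      nlinarith [mul_pos hν0 hs2pos]
    have h2 : sfbSigma ν * Real.cos (ν * τ) ≤ sfbSigma ν :=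
      (mul_le_of_le_one_right hσ.le (Real.cos_le_one _))
    have h3 : sfbSigma ν < ν * Real.sqrt 2 := by
      rw [sfbSigma]; exact mul_lt_mul_of_pos_left hs2 hν0
    linarith
  have hnum : 0 < ν * Real.sqrt 2 *
      Real.sqrt (2 * ν ^ 2 * Real.cosh (sfbSigma ν * ξ) ^ 2 - sfbSigma ν ^ 2) := by
    apply mul_pos (mul_pos hν0 hs2pos)
    apply Real.sqrt_pos.mpr
    have hcosh2 : 1 ≤ Real.cosh (sfbSigma ν * ξ) ^ 2 := by nlinarith
    nlinarith [pow_pos hν0 4, pow_pos hν0 2]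
  have hG : 0 < sfbG ν ξ τ := div_pos hnum hden
  -- sin φ ≠ 0
  have htanh : Real.tanh (sfbSigma ν * ξ) ≠ 0 := by
    rw [Real.tanh_eq_sinh_div_cosh]
    apply div_ne_zero
    · rw [ne_eq, Real.sinh_eq_zero]
      exact mul_ne_zero hσ.ne' hξ
    · exact (Real.cosh_pos _).ne'
  have hsin : Real.sin (sfbPhi ν ξ) ≠ 0 := by
    rw [sfbPhi, Real.sin_arctan]
    apply div_ne_zero
    · exact mul_ne_zero (neg_ne_zero.mpr (div_ne_zero hσ.ne' (by positivity))) htanh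
    · positivity
  -- conclude
  rw [sfbA, mul_eq_zero] at h
  rcases h with h | h
  · exact Complex.exp_ne_zero _ h
  · have him := congrArg Complex.im h
    rw [mul_comm Complex.I] at him
    simp [Complex.exp_mul_I, Complex.mul_im] at him
    rcases him with h | h
    · exact hG.ne' h
    · exact hsin h
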